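/- Every obstruction of the Fibonacci word has length equal to a Fibonacci number (where the Fibonacci numbers are 1, 2, 3, 5, 8, ...). -/

import Mathlib

/-- The factor of the infinite word `W` of length `n` starting at position `i`. -/
def factorAt {α : Type*} (W : ℕ → α) (i n : ℕ) : List α :=
  (List.range n).map (fun j => W (i + j))

/-- `v` is a (contiguous) factor of the infinite word `W`. -/
def IsFactor {α : Type*} (W : ℕ → α) (v : List α) : Prop :=
  ∃ i, factorAt W i v.length = v

/-- `v` is an obstruction for `W`: not a factor, but all proper factors of `v` are factors. -/
def IsObstructionW {α : Type*} (W : ℕ → α) (v : List α) : Prop :=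
  ¬ IsFactor W v ∧ ∀ u : List α, u <:+: v → u ≠ v → IsFactor W u

/-- Cogrowth: the number of obstructions of length at most `n`. -/
noncomputable def cogrowth {α : Type*} (W : ℕ → α) (n : ℕ) : ℕ :=
  {v : List α | IsObstructionW W v ∧ v.length ≤ n}.ncard

def UniformlyRecurrent {α : Type*} (W : ℕ → α) : Prop :=
  ∀ u : List α, IsFactor W u → ∃ C, ∀ v : List α, IsFactor W v → v.length = C → u <:+: v

def EventuallyPeriodic {α : Type*} (W : ℕ → α) : Prop :=
  ∃ p, 0 < p ∧ ∃ N, ∀ i, N ≤ i → W (i + p) = W i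

/-- Fibonacci finite words: u₀ = b = ff, u₁ = a = tt, u_{k+2} = u_{k+1} ++ u_k. -/
def fibWordAux : ℕ → List Bool
  | 0 => [false]
  | 1 => [true]
  | (k+2) => fibWordAux (k+1) ++ fibWordAux k

/-- The infinite Fibonacci word, limit of the `fibWordAux` (letter `a` = `true`, `b` = `false`). -/
def fibWord (n : ℕ) : Bool := (fibWordAux (n+2)).getD n false

/-!
Write an obstruction of length at least two as `x u y` (shorter words are always factors). Since
`x u` and `u y` are factors but `x u y` is not, the letter following an occurrence of `x u` differs
from `y` and the letter preceding an occurrence of `u y` differs from `x`: over a binary alphabet,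
`u` is bispecial. A nonempty bispecial factor `u` of the Fibonacci word begins with `a` (because
`bb` is not a factor), so desubstituting `u b` along `σ : a ↦ ab, b ↦ a` gives `u = σ(u') a`, and
`u'` is again bispecial. Hence `u` is a central word, i.e. `fibWordAux (k + 2)` without its last
two letters, and `|x u y| = |fibWordAux (k + 2)|` is a Fibonacci number.
-/

section InfiniteWord

variable {α : Type*} {W : ℕ → α}

@[simp] lemma length_factorAt (W : ℕ → α) (i n : ℕ) : (factorAt W i n).length = n := by
  simp [factorAt]

lemma factorAt_add (W : ℕ → α) (i m n : ℕ) :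
    factorAt W i (m + n) = factorAt W i m ++ factorAt W (i + m) n := by
  simp [factorAt, List.range_add, Function.comp_def, Nat.add_assoc]

lemma isFactor_nil : IsFactor W [] := ⟨0, rfl⟩

lemma isFactor_of_infix_factorAt {w : List α} {i n : ℕ} (h : w <:+: factorAt W i n) :
    IsFactor W w := by
  obtain ⟨p, q, hpq⟩ := h
  have hn : n = p.length + w.length + q.length := by
    simpa [Nat.add_assoc] using (congrArg List.length hpq).symm
  rw [hn, factorAt_add, factorAt_add] at hpq
  exact ⟨i + p.length, (List.append_inj (List.append_inj hpq (by simp)).1 (by simp)).2.symm⟩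

lemma IsFactor.infix {v w : List α} (h : IsFactor W w) (hv : v <:+: w) : IsFactor W v := by
  obtain ⟨i, hi⟩ := h
  exact isFactor_of_infix_factorAt (hi ▸ hv)

lemma isFactor_iff_exists_infix_factorAt_zero {w : List α} :
    IsFactor W w ↔ ∃ n, w <:+: factorAt W 0 n := by
  refine ⟨fun ⟨i, hi⟩ => ⟨i + w.length, ?_⟩, fun ⟨_, h⟩ => isFactor_of_infix_factorAt h⟩
  rw [factorAt_add, Nat.zero_add, hi]
  exact (List.suffix_append _ _).isInfix

lemma IsFactor.exists_append_singleton {w : List α} (h : IsFactor W w) :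
    ∃ c, IsFactor W (w ++ [c]) := by
  obtain ⟨i, hi⟩ := h
  refine ⟨W (i + w.length), i, ?_⟩
  rw [List.length_append, factorAt_add, hi]
  simp [factorAt]

namespace IsObstructionW

variable {x y : α} {u v : List α}

lemma exists_eq_cons_append (hv : IsObstructionW W v) (hW : ∀ c, IsFactor W [c]) :
    ∃ x u y, v = x :: (u ++ [y]) := by
  rcases v with _ | ⟨x, t⟩
  · exact absurd isFactor_nil hv.1
  rcases List.eq_nil_or_concat' t with rfl | ⟨u, y, rfl⟩
  · exact absurd (hW x) hv.1
  · exact ⟨x, u, y, rfl⟩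

lemma isFactor_cons (hv : IsObstructionW W (x :: (u ++ [y]))) : IsFactor W (x :: u) :=
  hv.2 _ ⟨[], [y], by simp⟩ fun h => by simpa using congrArg List.length h

lemma isFactor_append (hv : IsObstructionW W (x :: (u ++ [y]))) : IsFactor W (u ++ [y]) :=
  hv.2 _ ⟨[x], [], by simp⟩ fun h => by simpa using congrArg List.length h

lemma exists_ne_isFactor_append (hv : IsObstructionW W (x :: (u ++ [y]))) :
    ∃ d ≠ y, IsFactor W (u ++ [d]) := by
  obtain ⟨d, hd⟩ := hv.isFactor_cons.exists_append_singleton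
  refine ⟨d, ?_, hd.infix ⟨[x], [], by simp⟩⟩
  rintro rfl
  exact hv.1 (by simpa using hd)

lemma exists_ne_isFactor_cons (hW : ∀ w, IsFactor W w → ∃ c, IsFactor W (c :: w))
    (hv : IsObstructionW W (x :: (u ++ [y]))) : ∃ c ≠ x, IsFactor W (c :: u) := by
  obtain ⟨c, hc⟩ := hW _ hv.isFactor_append
  refine ⟨c, ?_, hc.infix ⟨[], [y], by simp⟩⟩
  rintro rfl
  exact hv.1 hc

end IsObstructionW

end InfiniteWord

lemma IsObstructionW.forall_isFactor_cons_and_append {W : ℕ → Bool} {x y : Bool} {u : List Bool}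
    (hW : ∀ w, IsFactor W w → ∃ c, IsFactor W (c :: w))
    (hv : IsObstructionW W (x :: (u ++ [y]))) (c : Bool) :
    IsFactor W (c :: u) ∧ IsFactor W (u ++ [c]) := by
  obtain ⟨c', hc'x, hc'⟩ := hv.exists_ne_isFactor_cons hW
  obtain ⟨d, hdy, hd⟩ := hv.exists_ne_isFactor_append
  constructor
  · by_cases hcx : c = x
    · exact hcx ▸ hv.isFactor_cons
    · rwa [Bool.eq_not_of_ne hcx, ← Bool.eq_not_of_ne hc'x]
  · by_cases hcy : c = y
    · exact hcy ▸ hv.isFactor_append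
    · rwa [Bool.eq_not_of_ne hcy, ← Bool.eq_not_of_ne hdy]

/-- The Fibonacci morphism `σ : a ↦ ab, b ↦ a`. -/
def fibMorphism (w : List Bool) : List Bool :=
  w.flatMap fun c => if c then [true, false] else [true]

@[simp] lemma fibMorphism_nil : fibMorphism [] = [] := rfl

@[simp] lemma fibMorphism_append (x y : List Bool) :
    fibMorphism (x ++ y) = fibMorphism x ++ fibMorphism y := by
  simp [fibMorphism]

@[simp] lemma fibMorphism_cons_true (w : List Bool) :
    fibMorphism (true :: w) = true :: false :: fibMorphism w := rfl

@[simp] lemma fibMorphism_cons_false (w : List Bool) :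
    fibMorphism (false :: w) = true :: fibMorphism w := rfl

lemma head?_fibMorphism_ne_false (w : List Bool) : (fibMorphism w).head? ≠ some false := by
  rcases w with _ | ⟨_ | _, w⟩ <;> simp

lemma length_le_length_fibMorphism (w : List Bool) : w.length ≤ (fibMorphism w).length := by
  induction w with
  | nil => simp
  | cons c w ih => cases c <;> simp <;> omega

lemma not_ff_infix_fibMorphism (w : List Bool) : ¬ [false, false] <:+: fibMorphism w := by
  induction w with
  | nil => simp
  | cons c w ih =>
    have hw := head?_fibMorphism_ne_false w
    cases c <;> simp only [fibMorphism_cons_true, fibMorphism_cons_false, List.infix_cons_iff] <;>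
      rcases h : fibMorphism w with _ | ⟨_ | _, _⟩ <;> simp_all

lemma fibMorphism_eq_append_false {z w : List Bool} (h : fibMorphism z = w ++ [false]) :
    ∃ u, z = u ++ [true] ∧ w = fibMorphism u ++ [true] := by
  rcases List.eq_nil_or_concat' z with rfl | ⟨u, _ | _, rfl⟩ <;> simp at h
  exact ⟨u, rfl, List.append_cancel_right (by rw [← h]; simp)⟩

/-- Left inverse of `fibMorphism`, parsing greedily into the blocks `ab` and `a`. -/
def fibDecode : List Bool → List Bool
  | [] => []
  | [true] => [false]
  | true :: false :: r => true :: fibDecode r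
  | true :: true :: r => false :: fibDecode (true :: r)
  | false :: r => fibDecode r

lemma fibDecode_append {l₁ l₂ : List Bool} (h : l₂.head? ≠ some false) :
    fibDecode (l₁ ++ l₂) = fibDecode l₁ ++ fibDecode l₂ := by
  rcases l₂ with _ | ⟨_ | _, r⟩
  · simp [fibDecode]
  · simp at h
  induction l₁ using fibDecode.induct <;> simp_all [fibDecode]

@[simp] lemma fibDecode_fibMorphism (w : List Bool) : fibDecode (fibMorphism w) = w := by
  induction w with
  | nil => rfl
  | cons c w ih =>
    have hw := head?_fibMorphism_ne_false w
    cases c <;> rcases h : fibMorphism w with _ | ⟨_ | _, _⟩ <;> simp_all [fibDecode]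

lemma fibMorphism_fibDecode {w : List Bool} (hw : w.head? ≠ some false)
    (hff : ¬ [false, false] <:+: w) : fibMorphism (fibDecode w) = w := by
  induction w using fibDecode.induct with
  | case1 | case2 => rfl
  | case3 r ih =>
    have hr : r.head? ≠ some false := by
      rcases r with _ | ⟨_ | _, r⟩ <;> simp
      exact hff ⟨[true], r, rfl⟩
    have hrff : ¬ [false, false] <:+: r := fun h => hff (List.infix_cons (List.infix_cons h))
    simp [fibDecode, ih hr hrff]
  | case4 r ih =>
    have hrff : ¬ [false, false] <:+: true :: r := fun h => hff (List.infix_cons h)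
    simp [fibDecode, ih (by simp) hrff]
  | case5 r ih => simp at hw

lemma fibWordAux_add_two (k : ℕ) : fibWordAux (k + 2) = fibWordAux (k + 1) ++ fibWordAux k := rfl

lemma fibMorphism_fibWordAux : ∀ k, fibMorphism (fibWordAux k) = fibWordAux (k + 1)
  | 0 => rfl
  | 1 => rfl
  | k + 2 => by
    rw [fibWordAux_add_two, fibMorphism_append, fibMorphism_fibWordAux (k + 1),
      fibMorphism_fibWordAux k, ← fibWordAux_add_two]

lemma length_fibWordAux : ∀ k, (fibWordAux k).length = Nat.fib (k + 1)
  | 0 => rfl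
  | 1 => rfl
  | k + 2 => by
    rw [fibWordAux_add_two, List.length_append, length_fibWordAux (k + 1), length_fibWordAux k,
      Nat.fib_add_two (n := k + 1), add_comm]

lemma fibWordAux_ne_nil (k : ℕ) : fibWordAux k ≠ [] :=
  List.ne_nil_of_length_pos (by rw [length_fibWordAux]; exact Nat.fib_pos.2 k.succ_pos)

lemma fibWordAux_infix_add_two (k : ℕ) : fibWordAux k <:+: fibWordAux (k + 2) :=
  (List.suffix_append _ _).isInfix

def IsFibFactor (w : List Bool) : Prop := ∃ k, w <:+: fibWordAux k

lemma IsFibFactor.infix {v w : List Bool} (h : IsFibFactor w) (hv : v <:+: w) : IsFibFactor v :=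
  h.imp fun _ => hv.trans

lemma IsFibFactor.exists_infix_fibMorphism {w : List Bool} (h : IsFibFactor w) :
    ∃ z, IsFibFactor z ∧ w <:+: fibMorphism z := by
  obtain ⟨k, hk⟩ := h
  refine ⟨fibWordAux (k + 1), ⟨k + 1, List.infix_refl _⟩, ?_⟩
  rw [fibMorphism_fibWordAux]
  exact hk.trans (fibWordAux_infix_add_two k)

lemma not_isFibFactor_ff : ¬ IsFibFactor [false, false] := fun h =>
  let ⟨z, _, hz⟩ := h.exists_infix_fibMorphism
  not_ff_infix_fibMorphism z hz

lemma IsFibFactor.exists_cons {w : List Bool} (h : IsFibFactor w) : ∃ c, IsFibFactor (c :: w) := by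
  obtain ⟨k, p, q, hk⟩ := h
  rcases List.eq_nil_or_concat' (fibWordAux (k + 1) ++ p) with h0 | ⟨L, c, hL⟩
  · simp [fibWordAux_ne_nil] at h0
  · refine ⟨c, k + 2, L, q, ?_⟩
    rw [fibWordAux_add_two, ← hk, ← List.append_assoc, ← List.append_assoc, hL]
    simp

lemma IsFibFactor.true_false_cons {w : List Bool} (h : IsFibFactor (false :: w)) :
    IsFibFactor (true :: false :: w) := by
  obtain ⟨_ | _, hc⟩ := h.exists_cons
  · exact absurd (hc.infix ⟨[], w, rfl⟩) not_isFibFactor_ff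
  · exact hc

lemma fibDecode_infix_and_fibMorphism_fibDecode {p w q z : List Bool}
    (h : p ++ w ++ q = fibMorphism z) (hw : w.head? ≠ some false) (hq : q.head? ≠ some false) :
    fibDecode w <:+: z ∧ fibMorphism (fibDecode w) = w := by
  have hwq : (w ++ q).head? ≠ some false := by cases w <;> simp_all
  have hdec : fibDecode p ++ fibDecode w ++ fibDecode q = z := by
    rw [List.append_assoc, ← fibDecode_append hq, ← fibDecode_append hwq, ← List.append_assoc, h,
      fibDecode_fibMorphism]
  exact ⟨⟨_, _, hdec⟩, fibMorphism_fibDecode hw fun hff =>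
    not_ff_infix_fibMorphism z (h ▸ hff.trans (List.infix_append p w q))⟩

lemma head?_ne_false_of_append_false_append {p w q z : List Bool}
    (h : p ++ (w ++ [false]) ++ q = fibMorphism z) : q.head? ≠ some false := by
  intro hq
  rcases q with _ | ⟨_ | _, q⟩ <;> simp at hq
  exact not_ff_infix_fibMorphism z ⟨p ++ w, q, by rw [← h]; simp⟩

lemma IsFibFactor.exists_fibMorphism_eq_append_false {w : List Bool}
    (h : IsFibFactor (w ++ [false])) (hw : w.head? = some true) :
    ∃ z, IsFibFactor z ∧ fibMorphism z = w ++ [false] := by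
  obtain ⟨z, hz, p, q, hpq⟩ := h.exists_infix_fibMorphism
  obtain ⟨hinf, heq⟩ := fibDecode_infix_and_fibMorphism_fibDecode hpq (by cases w <;> simp_all)
    (head?_ne_false_of_append_false_append hpq)
  exact ⟨_, hz.infix hinf, heq⟩

lemma IsFibFactor.of_fibMorphism_append_true {x : List Bool}
    (h : IsFibFactor (fibMorphism x ++ [true])) : IsFibFactor x := by
  obtain ⟨z, hz, p, q, hpq⟩ := h.exists_infix_fibMorphism
  have hhead : ∀ l, (fibMorphism x ++ true :: l).head? ≠ some false := by
    intro l
    rcases x with _ | ⟨_ | _, _⟩ <;> simp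
  by_cases hq : q.head? = some false
  · obtain ⟨q, rfl⟩ : ∃ q', q = false :: q' := by rcases q with _ | ⟨_ | _, q⟩ <;> simp_all
    have hpq' : p ++ (fibMorphism x ++ [true] ++ [false]) ++ q = fibMorphism z := by
      rw [← hpq]; simp
    have hinf := (fibDecode_infix_and_fibMorphism_fibDecode hpq' (by simpa using hhead [false])
      (head?_ne_false_of_append_false_append hpq')).1
    rw [show fibMorphism x ++ [true] ++ [false] = fibMorphism (x ++ [true]) by simp,
      fibDecode_fibMorphism] at hinf
    exact hz.infix ((List.prefix_append x [true]).isInfix.trans hinf)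
  · have hinf := (fibDecode_infix_and_fibMorphism_fibDecode hpq (hhead []) hq).1
    rw [fibDecode_append (by simp), fibDecode_fibMorphism] at hinf
    exact hz.infix ((List.prefix_append x _).isInfix.trans hinf)

def IsFibBispecial (u : List Bool) : Prop :=
  ∀ c, IsFibFactor (c :: u) ∧ IsFibFactor (u ++ [c])

lemma IsFibBispecial.exists_eq_fibMorphism_append {u : List Bool} (h : IsFibBispecial u)
    (hu : u ≠ []) : ∃ u', IsFibBispecial u' ∧ u = fibMorphism u' ++ [true] := by
  have hhead : u.head? = some true := by
    rcases u with _ | ⟨_ | _, u⟩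
    · contradiction
    · exact absurd ((h false).1.infix ⟨[], u, rfl⟩) not_isFibFactor_ff
    · rfl
  obtain ⟨z, hz, hσz⟩ := (h false).2.exists_fibMorphism_eq_append_false hhead
  obtain ⟨u', rfl, rfl⟩ := fibMorphism_eq_append_false hσz
  -- `a u = σ(b u') a`, `a b u = σ(a u') a` and `u a = σ(u' b) a`
  refine ⟨u', fun c => ⟨?_, ?_⟩, rfl⟩
  · cases c
    · refine IsFibFactor.of_fibMorphism_append_true ?_
      simpa using (h true).1
    · refine IsFibFactor.of_fibMorphism_append_true ?_
      simpa using (h false).1.true_false_cons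
  · cases c
    · refine IsFibFactor.of_fibMorphism_append_true ?_
      simpa using (h true).2
    · exact hz

/-- The palindromic prefixes `ε, a, aba, abaaba, …` of the Fibonacci word. -/
def centralWord : ℕ → List Bool
  | 0 => []
  | k + 1 => fibMorphism (centralWord k) ++ [true]

lemma exists_fibWordAux_eq_centralWord_append (k : ℕ) :
    ∃ c, fibWordAux (k + 2) = centralWord k ++ [c, !c] := by
  induction k with
  | zero => exact ⟨true, rfl⟩
  | succ k ih =>
    obtain ⟨c, hc⟩ := ih
    refine ⟨!c, ?_⟩
    rw [← fibMorphism_fibWordAux, hc, fibMorphism_append]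
    cases c <;> simp [centralWord]

lemma length_centralWord (k : ℕ) : (centralWord k).length + 2 = Nat.fib (k + 3) := by
  obtain ⟨c, hc⟩ := exists_fibWordAux_eq_centralWord_append k
  simpa [length_fibWordAux] using (congrArg List.length hc).symm

theorem IsFibBispecial.exists_eq_centralWord {u : List Bool} (h : IsFibBispecial u) :
    ∃ k, u = centralWord k := by
  rcases eq_or_ne u [] with rfl | hu
  · exact ⟨0, rfl⟩
  obtain ⟨u', hu', rfl⟩ := h.exists_eq_fibMorphism_append hu
  obtain ⟨k, rfl⟩ := hu'.exists_eq_centralWord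
  exact ⟨k + 1, rfl⟩
termination_by u.length
decreasing_by
  subst_vars
  simpa [Nat.lt_succ_iff] using length_le_length_fibMorphism u'

lemma fibWordAux_prefix_of_le {k m : ℕ} (h : k ≤ m) :
    fibWordAux (k + 1) <+: fibWordAux (m + 1) := by
  induction h with
  | refl => exact List.prefix_refl _
  | step _ ih => exact ih.trans (List.prefix_append _ _)

lemma fibWord_eq_getElem {m n : ℕ} (h : n < (fibWordAux (m + 1)).length) :
    fibWord n = (fibWordAux (m + 1))[n] := by
  have hn : n < (fibWordAux (n + 2)).length := by
    rw [length_fibWordAux]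
    exact Nat.lt_of_lt_of_le n.lt_succ_self (Nat.fib_add_two_strictMono.id_le (n + 1))
  rw [fibWord, List.getD_eq_getElem _ _ hn]
  rcases le_total (n + 1) m with hnm | hmn
  · exact (fibWordAux_prefix_of_le hnm).getElem hn
  · exact ((fibWordAux_prefix_of_le hmn).getElem h).symm

lemma factorAt_fibWord_zero (m : ℕ) :
    factorAt fibWord 0 (fibWordAux (m + 1)).length = fibWordAux (m + 1) :=
  List.ext_getElem (by simp) fun _ _ h => by simp [factorAt, fibWord_eq_getElem h]

lemma isFactor_fibWord_iff {w : List Bool} : IsFactor fibWord w ↔ IsFibFactor w := by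
  rw [isFactor_iff_exists_infix_factorAt_zero]
  constructor
  · rintro ⟨n, hn⟩
    obtain ⟨r, hr⟩ : ∃ r, (fibWordAux (n + 1)).length = n + r := by
      rw [length_fibWordAux]
      exact Nat.exists_eq_add_of_le (Nat.fib_add_two_strictMono.id_le n)
    refine ⟨n + 1, hn.trans ?_⟩
    rw [← factorAt_fibWord_zero, hr, factorAt_add]
    exact (List.prefix_append _ _).isInfix
  · rintro ⟨k, hk⟩
    refine ⟨(fibWordAux (k + 2)).length, ?_⟩
    rw [factorAt_fibWord_zero (k + 1)]
    exact hk.trans (fibWordAux_infix_add_two k)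

theorem fibWord_obstruction_length_fib (v : List Bool) (hv : IsObstructionW fibWord v) :
    ∃ k : ℕ, 1 ≤ k ∧ v.length = Nat.fib (k + 1) := by
  have hletters (c : Bool) : IsFactor fibWord [c] :=
    isFactor_fibWord_iff.2 ⟨2, by cases c <;> decide⟩
  have hext (w : List Bool) (hw : IsFactor fibWord w) : ∃ c, IsFactor fibWord (c :: w) := by
    simpa only [isFactor_fibWord_iff] using (isFactor_fibWord_iff.1 hw).exists_cons
  obtain ⟨x, u, y, rfl⟩ := hv.exists_eq_cons_append hletters
  have hu : IsFibBispecial u := fun c => by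
    simpa only [isFactor_fibWord_iff] using hv.forall_isFactor_cons_and_append hext c
  obtain ⟨k, rfl⟩ := hu.exists_eq_centralWord
  refine ⟨k + 2, by omega, ?_⟩
  simp [← length_centralWord]
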